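/- arXiv:1404.3462 — 2 statements merged into one kernel-verified Lean document; each statement's English description precedes it below -/
import Mathlib

section
/- The class of elementary amenable groups is the smallest class of groups containing the trivial group and closed under taking direct limits (directed unions) and under extensions 1 → N → G → Q → 1 where Q is either finite or infinite cyclic. -/
/-!
The Chou–Osin class `ChouOsin` has all the closure properties that define elementary amenable
groups, so it contains them; the converse inclusion is immediate, since finite groups and `ℤ` are
elementary amenable. An abelian group is the directed union of its finitely generated subgroups,
and these are reached from the trivial group by cyclic extensions. Closure under subgroups and
quotients is an induction over the construction of `ChouOsin`; closure under extensions
`N → G → Q` is an induction over the construction of `Q`, pulling everything back to `G` along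
the surjection.
-/

universe u

/-- A class of groups (in universe `u`) is *isomorphism closed* if it is invariant
under group isomorphism. -/
def IsoClosed (P : ∀ (G : Type u) [Group G], Prop) : Prop :=
  ∀ (G H : Type u) [Group G] [Group H], (G ≃* H) → P G → P H

/-- A class of groups is closed under (internal) directed unions: if a group `G` is the
directed union of a family of subgroups each belonging to the class, then `G` belongs to
the class. -/
def ClosedUnderDirectedUnions (P : ∀ (G : Type u) [Group G], Prop) : Prop :=
  ∀ (G : Type u) [Group G] (ι : Type u) (K : ι → Subgroup G),
    Nonempty ι → Directed (· ≤ ·) K → (⨆ i, K i) = ⊤ → (∀ i, P (K i)) → P G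

/-- A group `G` is *elementary amenable* if it belongs to every isomorphism-closed class of
groups which contains all finite groups and all abelian groups and is closed under taking
subgroups, quotients, directed unions, and extensions.  (That is, `G` lies in the smallest
such class.) -/
def ElementaryAmenable (G : Type u) [Group G] : Prop :=
  ∀ P : ∀ (G : Type u) [Group G], Prop,
    IsoClosed P →
    (∀ (H : Type u) [Group H], Finite H → P H) →
    (∀ (H : Type u) [Group H], (∀ a b : H, a * b = b * a) → P H) →
    (∀ (H : Type u) [Group H] (K : Subgroup H), P H → P K) →
    (∀ (H : Type u) [Group H] (N : Subgroup H) [N.Normal], P H → P (H ⧸ N)) →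
    ClosedUnderDirectedUnions P →
    (∀ (H : Type u) [Group H] (N : Subgroup H) [N.Normal], P N → P (H ⧸ N) → P H) →
    P G

open Function

theorem Subgroup.iSup_eq_top_iff_of_directed {G : Type*} [Group G] {ι : Sort*} [Nonempty ι]
    {K : ι → Subgroup G} (hK : Directed (· ≤ ·) K) : ⨆ i, K i = ⊤ ↔ ∀ x, ∃ i, x ∈ K i := by
  simp [eq_top_iff', Subgroup.mem_iSup_of_directed hK]

theorem MonoidHom.ker_subgroupComap {G Q : Type*} [Group G] [Group Q] (f : G →* Q)
    (K : Subgroup Q) : (f.subgroupComap K).ker = f.ker.subgroupOf (K.comap f) := by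
  ext x
  simp only [MonoidHom.mem_ker, Subgroup.mem_subgroupOf, Subtype.ext_iff,
    OneMemClass.coe_one]
  rfl

def FiniteOrCyclic (Q : Type*) [Group Q] : Prop :=
  Finite Q ∨ IsCyclic Q

namespace FiniteOrCyclic

variable {Q Q' : Type*} [Group Q] [Group Q']

theorem of_surjective (f : Q →* Q') (hf : Surjective f) (h : FiniteOrCyclic Q) :
    FiniteOrCyclic Q' :=
  h.imp (fun (_ : Finite Q) => Finite.of_surjective f hf)
    (fun (_ : IsCyclic Q) => isCyclic_of_surjective f hf)

theorem subgroup (h : FiniteOrCyclic Q) (K : Subgroup Q) : FiniteOrCyclic K :=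
  h.imp (fun (_ : Finite Q) => inferInstance) (fun (_ : IsCyclic Q) => inferInstance)

theorem finite_or_nonempty_mulEquiv_int (h : FiniteOrCyclic Q) :
    Finite Q ∨ Nonempty (Q ≃* Multiplicative ℤ) := by
  rcases h with h | h
  · exact .inl h
  by_cases hfin : Finite Q
  · exact .inl hfin
  have : Infinite Q := not_finite_iff_infinite.mp hfin
  obtain ⟨g, hg⟩ := isCyclic_iff_exists_zpowers_eq_top.mp h
  exact .inr ⟨(intEquivOfZPowersEqTop g hg).symm⟩

end FiniteOrCyclic

def ChouOsin (G : Type u) [Group G] : Prop :=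
  ∀ P : ∀ (G : Type u) [Group G], Prop,
    IsoClosed P →
    (∀ (H : Type u) [Group H], Subsingleton H → P H) →
    ClosedUnderDirectedUnions P →
    (∀ (H : Type u) [Group H] (N : Subgroup H) [N.Normal], P N → FiniteOrCyclic (H ⧸ N) → P H) →
    P G

namespace ChouOsin

variable {G H Q : Type u} [Group G] [Group H] [Group Q]

theorem of_mulEquiv (e : G ≃* H) (h : ChouOsin G) : ChouOsin H :=
  fun P hiso htriv hunion hext => hiso G H e (h P hiso htriv hunion hext)

theorem of_subsingleton [Subsingleton G] : ChouOsin G :=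
  fun _ _ htriv _ _ => htriv G ‹_›

theorem of_directed {ι : Type u} [Nonempty ι] (K : ι → Subgroup G) (hK : Directed (· ≤ ·) K)
    (hcover : ∀ x, ∃ i, x ∈ K i) (h : ∀ i, ChouOsin (K i)) : ChouOsin G :=
  fun P hiso htriv hunion hext => hunion G ι K ‹_› hK
    ((Subgroup.iSup_eq_top_iff_of_directed hK).mpr hcover) fun i => h i P hiso htriv hunion hext

theorem isoClosed : IsoClosed ChouOsin :=
  fun _ _ _ _ => of_mulEquiv

theorem closedUnderDirectedUnions : ClosedUnderDirectedUnions ChouOsin :=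
  fun _ _ _ K _ hK htop => of_directed K hK ((Subgroup.iSup_eq_top_iff_of_directed hK).mp htop)

theorem of_normal_of_finiteOrCyclic (N : Subgroup G) [N.Normal] (hN : ChouOsin N)
    (hQ : FiniteOrCyclic (G ⧸ N)) : ChouOsin G :=
  fun P hiso htriv hunion hext => hext G N (hN P hiso htriv hunion hext) hQ

theorem of_ker_of_finiteOrCyclic_range (f : G →* Q) (hker : ChouOsin f.ker)
    (hrange : FiniteOrCyclic f.range) : ChouOsin G :=
  of_normal_of_finiteOrCyclic f.ker hker <|
    hrange.of_surjective (QuotientGroup.quotientKerEquivRange f).symm.toMonoidHom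
      (QuotientGroup.quotientKerEquivRange f).symm.surjective

theorem of_finite [Finite G] : ChouOsin G :=
  of_ker_of_finiteOrCyclic_range (MonoidHom.id G)
    (by rw [MonoidHom.ker_id]; exact of_subsingleton) (.inl inferInstance)

theorem closure_finset {G : Type u} [CommGroup G] (S : Finset G) :
    ChouOsin (Subgroup.closure (S : Set G)) := by
  classical
  induction S using Finset.induction_on with
  | empty =>
    rw [Finset.coe_empty, Subgroup.closure_empty]
    exact of_subsingleton
  | insert a S _ ih =>
    rw [Finset.coe_insert, ← Set.singleton_union, Subgroup.closure_union,
      ← Subgroup.zpowers_eq_closure]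
    set A := Subgroup.zpowers a
    set B := Subgroup.closure (S : Set G)
    -- Noether's second isomorphism theorem makes `(A ⊔ B) / B` a quotient of the cyclic group `A`.
    have hcyc : IsCyclic ((A ⊔ B : Subgroup G) ⧸ B.subgroupOf (A ⊔ B)) :=
      have : IsCyclic (A ⧸ B.subgroupOf A) :=
        isCyclic_of_surjective _ (QuotientGroup.mk'_surjective _)
      isCyclic_of_surjective _ (QuotientGroup.quotientInfEquivProdNormalQuotient A B).surjective
    exact of_normal_of_finiteOrCyclic _
      (of_mulEquiv (Subgroup.subgroupOfEquivOfLe le_sup_right).symm ih) (.inr hcyc)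

theorem of_commGroup {G : Type u} [CommGroup G] : ChouOsin G := by
  classical
  refine of_directed (fun S : Finset G => Subgroup.closure (S : Set G)) ?_ ?_ closure_finset
  · exact fun S T => ⟨S ∪ T, Subgroup.closure_mono (by simp), Subgroup.closure_mono (by simp)⟩
  · exact fun x => ⟨{x}, Subgroup.subset_closure (by simp)⟩

theorem of_injective (h : ChouOsin G) (f : H →* G) (hf : Injective f) : ChouOsin H := by
  refine h (fun G _ => ∀ (H : Type u) [Group H] (f : H →* G), Injective f → ChouOsin H)
    ?iso ?triv ?union ?ext H f hf
  case iso =>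
    intro A B _ _ e hA H _ f hf
    exact hA H (e.symm.toMonoidHom.comp f) (e.symm.injective.comp hf)
  case triv =>
    intro A _ _ H _ f hf
    have := hf.subsingleton
    exact of_subsingleton
  case union =>
    intro A _ ι K _ hK htop hKi H _ f hf
    refine of_directed (fun i => (K i).comap f)
      (hK.mono_comp (· ≤ ·) fun _ _ => Subgroup.comap_mono)
      (fun x => (Subgroup.iSup_eq_top_iff_of_directed hK).mp htop (f x)) fun i => ?_
    exact hKi i _ (f.subgroupComap (K i)) fun x y hxy => Subtype.ext (hf congr($hxy.1))
  case ext =>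
    intro A _ N _ hN hQ H _ f hf
    set g := (QuotientGroup.mk' N).comp f
    have hgN : ∀ x : g.ker, f x ∈ N := fun x => (QuotientGroup.eq_one_iff _).mp x.2
    refine of_ker_of_finiteOrCyclic_range g ?_ (hQ.subgroup g.range)
    exact hN _ ((f.comp g.ker.subtype).codRestrict N hgN)
      fun x y hxy => Subtype.ext (hf congr($hxy.1))

theorem subgroup (h : ChouOsin G) (K : Subgroup G) : ChouOsin K :=
  h.of_injective K.subtype K.subtype_injective

theorem of_surjective (h : ChouOsin G) (f : G →* H) (hf : Surjective f) : ChouOsin H := by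
  refine h (fun G _ => ∀ (H : Type u) [Group H] (f : G →* H), Surjective f → ChouOsin H)
    ?iso ?triv ?union ?ext H f hf
  case iso =>
    intro A B _ _ e hA H _ f hf
    exact hA H (f.comp e.toMonoidHom) (hf.comp e.surjective)
  case triv =>
    intro A _ _ H _ f hf
    have := hf.subsingleton
    exact of_subsingleton
  case union =>
    intro A _ ι K _ hK htop hKi H _ f hf
    refine of_directed (fun i => (K i).map f)
      (hK.mono_comp (· ≤ ·) fun _ _ => Subgroup.map_mono)
      (fun y => ?_) fun i => hKi i _ (f.subgroupMap (K i)) (f.subgroupMap_surjective (K i))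
    obtain ⟨x, rfl⟩ := hf y
    obtain ⟨i, hi⟩ := (Subgroup.iSup_eq_top_iff_of_directed hK).mp htop x
    exact ⟨i, Subgroup.mem_map_of_mem f hi⟩
  case ext =>
    intro A _ N _ hN hQ H _ f hf
    have : (N.map f).Normal := Subgroup.Normal.map ‹_› f hf
    refine of_normal_of_finiteOrCyclic (N.map f)
      (hN _ (f.subgroupMap N) (f.subgroupMap_surjective N))
      (hQ.of_surjective (QuotientGroup.map N (N.map f) f (Subgroup.le_comap_map f N)) ?_)
    exact QuotientGroup.map_surjective_of_surjective _ _ _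
      ((QuotientGroup.mk'_surjective _).comp hf) _

theorem quotient (h : ChouOsin G) (N : Subgroup G) [N.Normal] : ChouOsin (G ⧸ N) :=
  h.of_surjective (QuotientGroup.mk' N) (QuotientGroup.mk'_surjective N)

theorem ker_subgroupComap {f : G →* Q} (hker : ChouOsin f.ker) (K : Subgroup Q) :
    ChouOsin (f.subgroupComap K).ker := by
  rw [MonoidHom.ker_subgroupComap]
  exact of_mulEquiv (Subgroup.subgroupOfEquivOfLe (f.ker_le_comap K)).symm hker

theorem of_surjective_of_ker (hQ : ChouOsin Q) (f : G →* Q) (hf : Surjective f)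
    (hker : ChouOsin f.ker) : ChouOsin G := by
  refine hQ (fun Q _ => ∀ (G : Type u) [Group G] (f : G →* Q), Surjective f →
    ChouOsin f.ker → ChouOsin G) ?iso ?triv ?union ?ext G f hf hker
  case iso =>
    intro A B _ _ e hA G _ f hf hker
    refine hA G ((e.symm : B →* A).comp f) (e.symm.surjective.comp hf) ?_
    rwa [MonoidHom.ker_mulEquiv_comp]
  case triv =>
    intro A _ _ G _ f _ hker
    rw [MonoidHom.ker_eq_top_iff.mpr (MonoidHom.ext fun _ => Subsingleton.elim _ _)] at hker
    exact of_mulEquiv Subgroup.topEquiv hker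
  case union =>
    intro A _ ι K _ hK htop hKi G _ f hf hker
    refine of_directed (fun i => (K i).comap f)
      (hK.mono_comp (· ≤ ·) fun _ _ => Subgroup.comap_mono)
      (fun x => (Subgroup.iSup_eq_top_iff_of_directed hK).mp htop (f x)) fun i => ?_
    exact hKi i _ (f.subgroupComap (K i)) (f.subgroupComap_surjective_of_surjective _ hf)
      (hker.ker_subgroupComap (K i))
  case ext =>
    intro A _ N _ hN hQ G _ f hf hker
    set g := (QuotientGroup.mk' N).comp f
    have hg : g.ker = N.comap f := by rw [← MonoidHom.comap_ker, QuotientGroup.ker_mk']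
    refine of_ker_of_finiteOrCyclic_range g ?_ (hQ.subgroup g.range)
    rw [hg]
    exact hN _ (f.subgroupComap N) (f.subgroupComap_surjective_of_surjective _ hf)
      (hker.ker_subgroupComap N)

theorem of_extension (N : Subgroup G) [N.Normal] (hN : ChouOsin N) (hQ : ChouOsin (G ⧸ N)) :
    ChouOsin G :=
  hQ.of_surjective_of_ker (QuotientGroup.mk' N) (QuotientGroup.mk'_surjective N)
    (by rwa [QuotientGroup.ker_mk'])

end ChouOsin

theorem ElementaryAmenable.chouOsin {G : Type u} [Group G] (hG : ElementaryAmenable G) :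
    ChouOsin G :=
  hG ChouOsin ChouOsin.isoClosed (fun _ _ _ => ChouOsin.of_finite)
    (fun _ _ hc => letI := CommGroup.mk hc; ChouOsin.of_commGroup)
    (fun _ _ K h => h.subgroup K) (fun _ _ N _ h => h.quotient N)
    ChouOsin.closedUnderDirectedUnions (fun _ _ N _ => ChouOsin.of_extension N)

/-- **Chou–Osin.** The class of elementary amenable groups is the smallest
(isomorphism-closed) class of groups containing the trivial group and closed under directed
unions and under extensions `1 → N → G → Q → 1` with `Q` finite or infinite cyclic. -/
theorem elementaryAmenable_iff_chou_osin (G : Type u) [Group G] :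
    ElementaryAmenable G ↔
      ∀ P : ∀ (G : Type u) [Group G], Prop,
        IsoClosed P →
        (∀ (H : Type u) [Group H], Subsingleton H → P H) →
        ClosedUnderDirectedUnions P →
        (∀ (H : Type u) [Group H] (N : Subgroup H) [N.Normal],
          P N → (Finite (H ⧸ N) ∨ Nonempty ((H ⧸ N) ≃* Multiplicative ℤ)) → P H) →
        P G := by
  constructor
  · intro hG P hiso htriv hunion hext
    exact hG.chouOsin P hiso htriv hunion fun H _ N _ hN hQ =>
      hext H N hN hQ.finite_or_nonempty_mulEquiv_int
  · intro hG P hiso hfinite hcomm _ _ hunion hext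
    refine hG P hiso (fun H _ _ => hfinite H inferInstance) hunion
      fun H _ N _ hN hQ => hext H N hN ?_
    rcases hQ with hQ | ⟨⟨e⟩⟩
    · exact hfinite _ hQ
    · exact hcomm _ fun a b => e.injective (by rw [map_mul, map_mul, mul_comm])
end

section
/- No infinite finitely generated simple group is elementary amenable. -/
/-!
Call a quotient of a subgroup a subquotient. The class of groups having no infinite finitely
generated simple subquotient contains the finite and the abelian groups (an abelian simple group
has prime order) and is closed under isomorphisms, subgroups, quotients and extensions (the image
of the normal subgroup in a simple subquotient is trivial or everything). It is closed under
directed unions because a finitely generated subquotient is already a subquotient of a finitely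
generated subgroup, which lies in one member of the union. Hence it contains every elementary
amenable group, while an infinite finitely generated simple group is a subquotient of itself.
-/

universe u

open Function

/-- The subgroup of `H` is encoded as an injective homomorphism from a group `A` in the universe
of `H`, and `S` as a quotient of `A`. -/
def IsSubquotient (S : Type*) (H : Type u) [Group S] [Group H] : Prop :=
  ∃ (A : Type u) (_ : Group A) (i : A →* H) (f : A →* S),
    Injective i ∧ Surjective f

theorem MonoidHom.exists_finset_map_closure_eq_top {A S : Type*} [Group A] [Group S]
    (f : A →* S) (hf : Surjective f) (hS : Group.FG S) :
    ∃ s : Finset A, (Subgroup.closure (s : Set A)).map f = ⊤ := by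
  classical
  obtain ⟨t, ht⟩ := hS.out
  refine ⟨t.image (surjInv hf), ?_⟩
  rw [MonoidHom.map_closure, Finset.coe_image, ← Set.image_comp,
    (rightInverse_surjInv hf).comp_eq_id, Set.image_id, ht]

theorem Subgroup.exists_finset_subset_of_directed {G ι : Type*} [Group G] [Nonempty ι]
    {K : ι → Subgroup G} (hK : Directed (· ≤ ·) K) (s : Finset G)
    (hs : (s : Set G) ⊆ (⨆ i, K i : Subgroup G)) : ∃ i, (s : Set G) ⊆ K i := by
  rw [Subgroup.coe_iSup_of_directed hK] at hs
  have hK' : Directed (· ⊆ ·) fun i => (K i : Set G) := hK.mono_comp _ fun _ _ h => h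
  exact hK'.exists_mem_subset_of_finset_subset_biUnion hs

namespace IsSubquotient

variable {S T H : Type*} [Group S] [Group T] [Group H]

theorem refl (S : Type*) [Group S] : IsSubquotient S S :=
  ⟨S, inferInstance, .id S, .id S, injective_id, surjective_id⟩

theorem of_surjective (f : H →* S) (hf : Surjective f) : IsSubquotient S H :=
  ⟨H, inferInstance, .id H, f, injective_id, hf⟩

theorem _root_.Subgroup.isSubquotient (K : Subgroup H) : IsSubquotient K H :=
  ⟨K, inferInstance, K.subtype, .id K, K.subtype_injective, surjective_id⟩

theorem trans (hST : IsSubquotient S T) (hTH : IsSubquotient T H) : IsSubquotient S H := by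
  obtain ⟨A, _, i, f, hi, hf⟩ := hST
  obtain ⟨B, _, j, g, hj, hg⟩ := hTH
  let C := i.range.comap g
  refine ⟨C, inferInstance, j.comp C.subtype,
    f.comp ((MonoidHom.ofInjective hi).symm.toMonoidHom.comp (g.subgroupComap i.range)),
    hj.comp C.subtype_injective, hf.comp ?_⟩
  exact (MonoidHom.ofInjective hi).symm.surjective.comp
    (g.subgroupComap_surjective_of_surjective _ hg)

theorem finite [Finite H] (h : IsSubquotient S H) : Finite S := by
  obtain ⟨A, _, i, f, hi, hf⟩ := h
  have : Finite A := Finite.of_injective i hi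
  exact Finite.of_surjective f hf

theorem mul_comm (h : IsSubquotient S H) (hH : ∀ a b : H, a * b = b * a) (a b : S) :
    a * b = b * a := by
  obtain ⟨A, _, i, f, hi, hf⟩ := h
  obtain ⟨x, rfl⟩ := hf a
  obtain ⟨y, rfl⟩ := hf b
  have hxy : x * y = y * x := hi (by rw [map_mul, map_mul, hH (i x)])
  rw [← map_mul, hxy, map_mul]

theorem exists_of_directed {ι : Type*} [Nonempty ι] {K : ι → Subgroup H}
    (hK : Directed (· ≤ ·) K) (hsup : ⨆ k, K k = ⊤) (hS : Group.FG S) (h : IsSubquotient S H) :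
    ∃ k, IsSubquotient S (K k) := by
  classical
  obtain ⟨A, _, i, f, hi, hf⟩ := h
  obtain ⟨s, hs⟩ := f.exists_finset_map_closure_eq_top hf hS
  obtain ⟨k, hk⟩ := Subgroup.exists_finset_subset_of_directed hK (s.image i) (by simp [hsup])
  set B := Subgroup.closure (s : Set A)
  have hB : B ≤ (K k).comap i :=
    (Subgroup.closure_le _).mpr fun x hx => hk (by simpa using ⟨x, hx, rfl⟩)
  refine ⟨k, B, inferInstance, (i.comp B.subtype).codRestrict (K k) fun x => hB x.2,
    f.comp B.subtype, ?_, ?_⟩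
  · exact (MonoidHom.injective_codRestrict _ _ _).mpr (hi.comp B.subtype_injective)
  · rw [← MonoidHom.range_eq_top, MonoidHom.range_comp, B.range_subtype, hs]

theorem of_normal [IsSimpleGroup S] (h : IsSubquotient S H) (N : Subgroup H) [hN : N.Normal] :
    IsSubquotient S N ∨ IsSubquotient S (H ⧸ N) := by
  obtain ⟨A, _, i, f, hi, hf⟩ := h
  rcases ((hN.comap i).map f hf).eq_bot_or_eq_top with hbot | htop
  · let φ := (QuotientGroup.mk' N).comp i
    have hker : φ.ker ≤ f.ker := by
      rwa [← MonoidHom.comap_ker, QuotientGroup.ker_mk', ← Subgroup.map_eq_bot_iff]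
    exact .inr ⟨A ⧸ φ.ker, inferInstance, QuotientGroup.kerLift φ, QuotientGroup.lift φ.ker f hker,
      QuotientGroup.kerLift_injective φ, QuotientGroup.lift_surjective_of_surjective _ _ hf _⟩
  · let B := N.comap i
    refine .inl ⟨B, inferInstance, (i.comp B.subtype).codRestrict N fun x => x.2,
      f.comp B.subtype, ?_, ?_⟩
    · exact (MonoidHom.injective_codRestrict _ _ _).mpr (hi.comp B.subtype_injective)
    · rw [← MonoidHom.range_eq_top, MonoidHom.range_comp, B.range_subtype, htop]

end IsSubquotient

def NoInfiniteFGSimpleSubquotient (H : Type u) [Group H] : Prop :=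
  ∀ (S : Type u) [Group S] [IsSimpleGroup S] [Infinite S], Group.FG S → ¬ IsSubquotient S H

namespace NoInfiniteFGSimpleSubquotient

variable {H T : Type u} [Group H] [Group T]

theorem of_isSubquotient (hTH : IsSubquotient T H) (hH : NoInfiniteFGSimpleSubquotient H) :
    NoInfiniteFGSimpleSubquotient T :=
  fun S _ _ _ hS hST => hH S hS (hST.trans hTH)

theorem of_finite [Finite H] : NoInfiniteFGSimpleSubquotient H := fun S _ _ _ _ h =>
  have := h.finite
  not_finite S

theorem of_mul_comm (hH : ∀ a b : H, a * b = b * a) : NoInfiniteFGSimpleSubquotient H :=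
  fun S _ hsimple _ _ h =>
  have : IsMulCommutative S := ⟨⟨h.mul_comm hH⟩⟩
  have := Nat.finite_of_card_ne_zero (Group.is_simple_iff_prime_card.mp hsimple).ne_zero
  not_finite S

theorem of_normal (N : Subgroup H) [N.Normal] (hN : NoInfiniteFGSimpleSubquotient N)
    (hQ : NoInfiniteFGSimpleSubquotient (H ⧸ N)) : NoInfiniteFGSimpleSubquotient H :=
  fun S _ _ _ hS h => (h.of_normal N).elim (hN S hS) (hQ S hS)

theorem closedUnderDirectedUnions :
    ClosedUnderDirectedUnions.{u} NoInfiniteFGSimpleSubquotient := by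
  intro G _ ι K _ hK hsup hKk S _ _ _ hS h
  obtain ⟨k, hk⟩ := h.exists_of_directed hK hsup hS
  exact hKk k S hS hk

end NoInfiniteFGSimpleSubquotient

/-- No infinite finitely generated simple group is elementary amenable. -/
theorem not_elementaryAmenable_of_infinite_fg_simple (G : Type u) [Group G]
    [Infinite G] (hfg : Group.FG G) (hs : IsSimpleGroup G) :
    ¬ ElementaryAmenable G := by
  intro hG
  have hG' : NoInfiniteFGSimpleSubquotient G := hG _
    (fun _ _ _ _ e h => h.of_isSubquotient (.of_surjective e.toMonoidHom e.surjective))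
    (fun _ _ _ => .of_finite)
    (fun _ _ => .of_mul_comm)
    (fun _ _ K h => h.of_isSubquotient K.isSubquotient)
    (fun _ _ N _ h => h.of_isSubquotient (.of_surjective _ (QuotientGroup.mk'_surjective N)))
    NoInfiniteFGSimpleSubquotient.closedUnderDirectedUnions
    (fun _ _ N _ => .of_normal N)
  exact hG' G hfg (.refl G)
end
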